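/- Let (x_i)_{i∈I}, U, p, θ be as follows: (x_i + U)_{i∈I} pairwise disjoint, μ(U) ∈ (0,∞), 1 < p < ∞, θ ≥ 0, and suppose μ(U) ≤ 1. Then the discrete grand space norm and the grand sequence norm are equivalent: for all sequences Λ = (λ_i), μ(U) ‖Λ‖_{ℓ^{p),θ}} ≤ ‖∑_i |λ_i| χ_{x_i+U}‖_{p),θ} ≤ μ(U)^{1/p} ‖Λ‖_{ℓ^{p),θ}}. In particular, Λ belongs to the discrete grand space (L^{p),θ})_d if and only if Λ ∈ ℓ^{p),θ}(I). -/

import Mathlib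

open MeasureTheory Set ENNReal Pointwise

/-- The generalized grand Lebesgue norm `‖f‖_{p),θ}`. -/
noncomputable def grandNorm (μ : Measure ℝ) (p θ : ℝ) (f : ℝ → ℝ) : ℝ≥0∞ :=
  ⨆ ε ∈ Set.Ioc (0:ℝ) (p - 1),
    ENNReal.ofReal (ε ^ (θ / (p - ε))) * eLpNorm f (ENNReal.ofReal (p - ε)) μ

/-- The grand Lebesgue sequence norm `‖u‖_{ℓ^{p),θ}(I)}`. -/
noncomputable def grandSeqNorm {I : Type*} (p θ : ℝ) (u : I → ℝ) : ℝ≥0∞ :=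
  ⨆ ε ∈ Set.Ioc (0:ℝ) (p - 1),
    ENNReal.ofReal (ε ^ (θ / (p - ε))) *
      (∑' k, ENNReal.ofReal (|u k| ^ (p - ε))) ^ (1 / (p - ε))

theorem stmt6 {I : Type*} [Countable I] (x : I → ℝ) (U : Set ℝ)
    (hU : MeasurableSet U) (hU0 : 0 < volume U) (hUfin : volume U < ∞) (hU1 : volume U ≤ 1)
    (hdisj : Pairwise fun i j => Disjoint (x i +ᵥ U) (x j +ᵥ U))
    (p θ : ℝ) (hp : 1 < p) (hθ : 0 ≤ θ) (Λ : I → ℝ) :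
    volume U * grandSeqNorm p θ Λ ≤
        grandNorm volume p θ
          (fun y => ∑' i, |Λ i| * (x i +ᵥ U).indicator (fun _ => (1:ℝ)) y) ∧
      grandNorm volume p θ
          (fun y => ∑' i, |Λ i| * (x i +ᵥ U).indicator (fun _ => (1:ℝ)) y) ≤
        (volume U) ^ (1 / p) * grandSeqNorm p θ Λ ∧
      (grandNorm volume p θ
          (fun y => ∑' i, |Λ i| * (x i +ᵥ U).indicator (fun _ => (1:ℝ)) y) < ∞ ↔
        grandSeqNorm p θ Λ < ∞) := by
  set A : I → Set ℝ := fun i => x i +ᵥ U with hA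
  set f : ℝ → ℝ := fun y => ∑' i, |Λ i| * (A i).indicator (fun _ => (1:ℝ)) y with hf
  have hAmeas : ∀ i, MeasurableSet (A i) := fun i => hU.const_vadd (x i)
  have hAvol : ∀ i, volume (A i) = volume U := fun i => measure_vadd volume (x i) U
  -- key computation of eLpNorm
  have key : ∀ q : ℝ, 1 ≤ q →
      eLpNorm f (ENNReal.ofReal q) volume =
        (volume U) ^ (1 / q) * (∑' i, ENNReal.ofReal (|Λ i| ^ q)) ^ (1 / q) := by
    intro q hq1
    have hq0 : (0:ℝ) < q := lt_of_lt_of_le one_pos hq1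
    rw [eLpNorm_eq_lintegral_rpow_enorm_toReal (by simpa using hq0) ENNReal.ofReal_ne_top,
      ENNReal.toReal_ofReal hq0.le]
    have hpt : ∀ y, ‖f y‖ₑ ^ q =
        ∑' i, (A i).indicator (fun _ => ENNReal.ofReal (|Λ i| ^ q)) y := by
      intro y
      by_cases h : ∃ j, y ∈ A j
      · obtain ⟨j, hj⟩ := h
        have hfy : f y = |Λ j| := by
          show (∑' i, |Λ i| * (A i).indicator (fun _ => (1:ℝ)) y) = |Λ j|
          rw [tsum_eq_single j]
          · simp [Set.indicator_of_mem hj]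
          · intro i hij
            have : y ∉ A i := fun hy => (hdisj hij).ne_of_mem hy hj rfl
            simp [Set.indicator_of_notMem this]
        have hrhs : (∑' i, (A i).indicator (fun _ => ENNReal.ofReal (|Λ i| ^ q)) y)
            = ENNReal.ofReal (|Λ j| ^ q) := by
          rw [tsum_eq_single j]
          · simp [Set.indicator_of_mem hj]
          · intro i hij
            have : y ∉ A i := fun hy => (hdisj hij).ne_of_mem hy hj rfl
            simp [Set.indicator_of_notMem this]
        rw [hfy, hrhs]
        rw [← ENNReal.ofReal_rpow_of_nonneg (abs_nonneg _) hq0.le]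
        congr 1
        exact Real.enorm_eq_ofReal (abs_nonneg _)
      · push_neg at h
        have hfy : f y = 0 := by
          show (∑' i, |Λ i| * (A i).indicator (fun _ => (1:ℝ)) y) = 0
          have hz : ∀ i, |Λ i| * (A i).indicator (fun _ => (1:ℝ)) y = 0 := fun i => by
            simp [Set.indicator_of_notMem (h i)]
          simp [hz]
        have : (∑' i, (A i).indicator (fun _ => ENNReal.ofReal (|Λ i| ^ q)) y) = 0 := by
          rw [ENNReal.summable.tsum_eq_zero_iff]
          intro i; simp [Set.indicator_of_notMem (h i)]
        rw [hfy, this]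
        simp [ENNReal.zero_rpow_of_pos hq0]
    have : ∫⁻ y, ‖f y‖ₑ ^ q = ∑' i, ENNReal.ofReal (|Λ i| ^ q) * volume U := by
      rw [lintegral_congr hpt, lintegral_tsum
        (fun i => ((measurable_const.indicator (hAmeas i)).aemeasurable))]
      congr 1; funext i
      rw [lintegral_indicator_const (hAmeas i), hAvol i]
    rw [this, ENNReal.tsum_mul_right, ENNReal.mul_rpow_of_nonneg _ _ (by positivity),
      mul_comm]
  -- rewrite grandNorm
  have hgn : grandNorm volume p θ f =
      ⨆ ε ∈ Set.Ioc (0:ℝ) (p - 1),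
        ENNReal.ofReal (ε ^ (θ / (p - ε))) *
          ((volume U) ^ (1 / (p - ε)) *
            (∑' i, ENNReal.ofReal (|Λ i| ^ (p - ε))) ^ (1 / (p - ε))) := by
    rw [grandNorm]
    congr 1; funext ε; congr 1; funext hε
    rw [key (p - ε) (by linarith [hε.2])]
  have hq1 : ∀ ε ∈ Set.Ioc (0:ℝ) (p - 1), 1 ≤ p - ε := fun ε hε => by linarith [hε.2]
  have hexp1 : ∀ ε ∈ Set.Ioc (0:ℝ) (p - 1),
      volume U ≤ (volume U) ^ (1 / (p - ε)) := by
    intro ε hε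
    calc volume U = (volume U) ^ (1:ℝ) := (ENNReal.rpow_one _).symm
    _ ≤ (volume U) ^ (1 / (p - ε)) := by
        apply ENNReal.rpow_le_rpow_of_exponent_ge hU1
        rw [div_le_one (by linarith [hq1 ε hε])]; linarith [hq1 ε hε]
  have hexp2 : ∀ ε ∈ Set.Ioc (0:ℝ) (p - 1),
      (volume U) ^ (1 / (p - ε)) ≤ (volume U) ^ (1 / p) := by
    intro ε hε
    apply ENNReal.rpow_le_rpow_of_exponent_ge hU1
    apply div_le_div_of_nonneg_left one_pos.le (by linarith [hq1 ε hε]) (by linarith [hε.1])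
  have h1 : volume U * grandSeqNorm p θ Λ ≤ grandNorm volume p θ f := by
    rw [hgn, grandSeqNorm]
    simp_rw [ENNReal.mul_iSup]
    apply iSup₂_le
    intro ε hε
    apply le_iSup₂_of_le ε hε
    rw [mul_left_comm]
    gcongr
    · exact hexp1 ε hε
  have h2 : grandNorm volume p θ f ≤ (volume U) ^ (1 / p) * grandSeqNorm p θ Λ := by
    rw [hgn]
    apply iSup₂_le
    intro ε hε
    calc ENNReal.ofReal (ε ^ (θ / (p - ε))) *
          ((volume U) ^ (1 / (p - ε)) *
            (∑' i, ENNReal.ofReal (|Λ i| ^ (p - ε))) ^ (1 / (p - ε)))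
        ≤ (volume U) ^ (1 / p) * (ENNReal.ofReal (ε ^ (θ / (p - ε))) *
            (∑' i, ENNReal.ofReal (|Λ i| ^ (p - ε))) ^ (1 / (p - ε))) := by
          rw [mul_left_comm]
          exact mul_le_mul_left (hexp2 ε hε) _
      _ ≤ (volume U) ^ (1 / p) * grandSeqNorm p θ Λ := by
          gcongr
          exact le_iSup₂_of_le ε hε le_rfl
  refine ⟨h1, h2, ?_, ?_⟩
  · intro h
    by_contra htop
    rw [not_lt, top_le_iff] at htop
    rw [htop, ENNReal.mul_top hU0.ne'] at h1
    exact absurd (lt_of_le_of_lt h1 h) (lt_irrefl _)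
  · intro h
    refine lt_of_le_of_lt h2 (ENNReal.mul_lt_top ?_ h)
    exact ENNReal.rpow_lt_top_of_nonneg (by positivity) hUfin.ne
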